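/- arXiv:1808.00242 — 2 statements merged into one kernel-verified Lean document; each statement's English description precedes it below -/
import Mathlib

section
/- If f : ℝ^p → ℝ is concave with a unique maximizer β_0, and f_n : ℝ^p → ℝ is a sequence of concave functions converging pointwise to f, then the convergence is uniform on compact sets, and any sequence of maximizers β_n of f_n converges to β_0. -/
/-!
A pointwise convergent sequence of concave functions is pointwise bounded. Its pointwise
infimum is then a finite concave function, hence continuous and bounded below on balls, and
concavity at midpoints turns this into a uniform upper bound on balls as well. Uniformly
bounded concave functions are equi-Lipschitz on smaller balls, and for an equicontinuous
family pointwise convergence is uniform on compact sets.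

For the maximizers: `f` is continuous, so `f ≤ f β₀ - δ` on the sphere of radius `r` about
`β₀`. If `βₙ` lay outside that ball, concavity of `fₙ` on the segment from `β₀` to `βₙ` would
give a point `y` of the sphere with `fₙ β₀ ≤ fₙ y`, which uniform convergence on the sphere
rules out once the error is below `δ / 2`.
-/

open Filter Topology Metric Set

theorem EquicontinuousOn.tendstoUniformlyOn_of_tendsto {ι X α : Type*} [TopologicalSpace X]
    [UniformSpace α] {F : ι → X → α} {f : X → α} {l : Filter ι} {K : Set X} (hK : IsCompact K)
    (hF : EquicontinuousOn F K) (h : ∀ x ∈ K, Tendsto (F · x) l (𝓝 (f x))) :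
    TendstoUniformlyOn F f l K := by
  have := (EquicontinuousOn.tendsto_uniformOnFun_iff_pi' (𝔖 := {K}) (by simpa) (by simpa) l f).2
    (by simpa [tendsto_pi_nhds] using h)
  exact UniformOnFun.tendsto_iff_tendstoUniformlyOn.1 this K rfl

section Module

variable {E : Type*} [AddCommGroup E] [Module ℝ E]

theorem concaveOn_ciInf {ι : Type*} [Nonempty ι] {s : Set E} {f : ι → E → ℝ}
    (hf : ∀ i, ConcaveOn ℝ s (f i)) (hbdd : ∀ x ∈ s, BddBelow (range fun i => f i x)) :
    ConcaveOn ℝ s fun x => ⨅ i, f i x := by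
  refine ⟨(hf (Classical.arbitrary ι)).1, fun x hx y hy a b ha hb hab => le_ciInf fun i => ?_⟩
  calc a • (⨅ i, f i x) + b • ⨅ i, f i y ≤ a • f i x + b • f i y := by
        gcongr
        exacts [ciInf_le (hbdd x hx) i, ciInf_le (hbdd y hy) i]
    _ ≤ f i (a • x + b • y) := (hf i).2 hx hy ha hb hab

theorem ConcaveOn.add_reflect_le {g : E → ℝ} (hg : ConcaveOn ℝ univ g) (c x : E) :
    g x + g ((2 : ℝ) • c - x) ≤ 2 * g c := by
  have h := hg.2 (mem_univ x) (mem_univ ((2 : ℝ) • c - x)) (by norm_num : (0 : ℝ) ≤ 1 / 2)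
    (by norm_num : (0 : ℝ) ≤ 1 / 2) (by norm_num)
  rw [show (1 / 2 : ℝ) • x + (1 / 2 : ℝ) • ((2 : ℝ) • c - x) = c by module, smul_eq_mul,
    smul_eq_mul] at h
  linarith

end Module

section Normed

variable {E : Type*} [NormedAddCommGroup E] [NormedSpace ℝ E]

theorem ConcaveOn.exists_mem_sphere_le {s : Set E} {g : E → ℝ} (hg : ConcaveOn ℝ s g) {x y : E}
    (hx : x ∈ s) (hy : y ∈ s) {r : ℝ} (hr : 0 ≤ r) (hry : r ≤ dist y x) (hxy : g x ≤ g y) :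
    ∃ z ∈ sphere x r, g x ≤ g z := by
  rcases hr.eq_or_lt with rfl | hr
  · exact ⟨x, by simp, le_rfl⟩
  have hd : 0 < dist y x := hr.trans_le hry
  set t := r / dist y x
  have ht : t ∈ Icc (0 : ℝ) 1 := ⟨by positivity, div_le_one_of_le₀ hry hd.le⟩
  refine ⟨AffineMap.lineMap x y t, ?_, ?_⟩
  · rw [mem_sphere, dist_lineMap_left, Real.norm_of_nonneg ht.1, dist_comm,
      div_mul_cancel₀ _ hd.ne']
  · have hseg : AffineMap.lineMap x y t ∈ segment ℝ x y :=
      segment_eq_image_lineMap ℝ x y ▸ mem_image_of_mem _ ht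
    simpa [hxy] using hg.min_le_of_mem_segment hx hy hseg

variable [FiniteDimensional ℝ E]

section Family

variable {ι : Type*} {f : ι → E → ℝ}

theorem exists_forall_abs_le_of_concaveOn (hf : ∀ i, ConcaveOn ℝ univ (f i))
    (hbdd : ∀ x, Bornology.IsBounded (range fun i => f i x)) (c : E) (r : ℝ) :
    ∃ M, ∀ i, ∀ x ∈ ball c r, |f i x| ≤ M := by
  cases isEmpty_or_nonempty ι
  · exact ⟨0, fun i => isEmptyElim i⟩
  have hinf := concaveOn_ciInf hf fun x _ => (hbdd x).bddBelow
  obtain ⟨m, hm⟩ := (isCompact_closedBall c r).bddBelow_image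
    ((hinf.continuousOn isOpen_univ).mono (subset_univ _))
  have hlower : ∀ i, ∀ x ∈ ball c r, m ≤ f i x := fun i x hx =>
    (hm (mem_image_of_mem _ (ball_subset_closedBall hx))).trans (ciInf_le (hbdd x).bddBelow i)
  obtain ⟨B, hB⟩ := (hbdd c).bddAbove
  refine ⟨max (-m) (2 * B - m), fun i x hx =>
    abs_le.2 ⟨by linarith [le_max_left (-m) (2 * B - m), hlower i x hx], ?_⟩⟩
  have hreflect : (2 : ℝ) • c - x ∈ ball c r := by
    rwa [mem_ball, dist_eq_norm, show (2 : ℝ) • c - x - c = -(x - c) by module, norm_neg,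
      ← dist_eq_norm]
  linarith [(hf i).add_reflect_le c x, hlower i _ hreflect, hB (mem_range_self i),
    le_max_right (-m) (2 * B - m)]

theorem exists_lipschitzOnWith_of_concaveOn (hf : ∀ i, ConcaveOn ℝ univ (f i))
    (hbdd : ∀ x, Bornology.IsBounded (range fun i => f i x)) (c : E) (r : ℝ) :
    ∃ K, ∀ i, LipschitzOnWith K (f i) (ball c r) := by
  obtain ⟨M, hM⟩ := exists_forall_abs_le_of_concaveOn hf hbdd c (r + 1)
  refine ⟨(2 * M / 1).toNNReal, fun i => ?_⟩
  simpa using ((hf i).subset (subset_univ _) (convex_ball c (r + 1))).lipschitzOnWith_of_abs_le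
    one_pos fun a ha => hM i a ha

end Family

theorem tendstoUniformlyOn_of_concaveOn_of_tendsto {F : ℕ → E → ℝ} {g : E → ℝ}
    (hF : ∀ n, ConcaveOn ℝ univ (F n)) (hlim : ∀ x, Tendsto (F · x) atTop (𝓝 (g x)))
    {K : Set E} (hK : IsCompact K) : TendstoUniformlyOn F g atTop K := by
  obtain ⟨r, hKr⟩ := hK.isBounded.subset_ball 0
  obtain ⟨L, hL⟩ := exists_lipschitzOnWith_of_concaveOn hF
    (fun x => isBounded_range_of_tendsto _ (hlim x)) 0 r
  have hequi : EquicontinuousOn F K :=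
    ((LipschitzOnWith.uniformEquicontinuousOn F L hL).mono hKr).equicontinuousOn
  exact hequi.tendstoUniformlyOn_of_tendsto hK fun x _ => hlim x

theorem tendsto_of_isMaxOn_of_concaveOn {f : E → ℝ} {F : ℕ → E → ℝ} {x₀ : E} {x : ℕ → E}
    (hf : ConcaveOn ℝ univ f) (hF : ∀ n, ConcaveOn ℝ univ (F n))
    (huniq : ∀ y, y ≠ x₀ → f y < f x₀)
    (hunif : ∀ r, TendstoUniformlyOn F f atTop (sphere x₀ r))
    (hx₀ : Tendsto (F · x₀) atTop (𝓝 (f x₀))) (hmax : ∀ n, IsMaxOn (F n) univ (x n)) :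
    Tendsto x atTop (𝓝 x₀) := by
  refine Metric.tendsto_nhds.2 fun r hr => ?_
  obtain ⟨δ, hδ, hgap⟩ := (isCompact_sphere x₀ r).exists_forall_le' (f := fun y => f x₀ - f y)
    (continuousOn_const.sub ((hf.continuousOn isOpen_univ).mono (subset_univ _)))
    (a := 0) fun y hy => sub_pos.2 (huniq y (ne_of_mem_sphere hy hr.ne'))
  filter_upwards [Metric.tendstoUniformlyOn_iff.1 (hunif r) (δ / 2) (half_pos hδ),
    Metric.tendsto_nhds.1 hx₀ (δ / 2) (half_pos hδ)] with n hsphere hcentre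
  by_contra! hfar
  obtain ⟨y, hy, hle⟩ := (hF n).exists_mem_sphere_le (mem_univ x₀) (mem_univ (x n)) hr.le hfar
    (hmax n (mem_univ x₀))
  have hy' := hsphere y hy
  rw [Real.dist_eq, abs_lt] at hcentre hy'
  linarith [hgap y hy]

end Normed

theorem concave_pointwise_convergence_of_maximizers_general
    {p : ℕ}
    (f : EuclideanSpace ℝ (Fin p) → ℝ)
    (fseq : ℕ → EuclideanSpace ℝ (Fin p) → ℝ)
    (β₀ : EuclideanSpace ℝ (Fin p))
    (βseq : ℕ → EuclideanSpace ℝ (Fin p))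
    (hf_concave : ConcaveOn ℝ Set.univ f)
    (hfn_concave : ∀ m, ConcaveOn ℝ Set.univ (fseq m))
    (huniq : ∀ β, β ≠ β₀ → f β < f β₀)       -- β₀ is the unique maximizer of f
    (hptwise : ∀ β, Tendsto (fun m => fseq m β) atTop (𝓝 (f β)))
    (hβmax : ∀ m β, fseq m β ≤ fseq m (βseq m)) :  -- βₙ maximizes fₙ
    (∀ K : Set (EuclideanSpace ℝ (Fin p)), IsCompact K →
        TendstoUniformlyOn fseq f atTop K)
      ∧ Tendsto βseq atTop (𝓝 β₀) := by
  have hunif : ∀ K : Set (EuclideanSpace ℝ (Fin p)), IsCompact K →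
      TendstoUniformlyOn fseq f atTop K := fun K hK =>
    tendstoUniformlyOn_of_concaveOn_of_tendsto hfn_concave hptwise hK
  exact ⟨hunif, tendsto_of_isMaxOn_of_concaveOn hf_concave hfn_concave huniq
    (fun r => hunif _ (isCompact_sphere β₀ r)) (hptwise β₀)
    fun m => isMaxOn_univ_iff.2 (hβmax m)⟩

/-- deterministic Andersen–Gill lemma: If `f : ℝ^p → ℝ` is concave with
unique maximizer `β₀` and `fₙ` is a sequence of concave functions converging pointwise
to `f`, then the convergence is uniform on compact sets and any sequence of maximizers
`βₙ` of `fₙ` converges to `β₀`. -/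
theorem concave_pointwise_convergence_of_maximizers
    {p : ℕ}
    (f : EuclideanSpace ℝ (Fin p) → ℝ)
    (fseq : ℕ → EuclideanSpace ℝ (Fin p) → ℝ)
    (β₀ : EuclideanSpace ℝ (Fin p))
    (βseq : ℕ → EuclideanSpace ℝ (Fin p))
    (hf_concave : ConcaveOn ℝ Set.univ f)
    (hfn_concave : ∀ m, ConcaveOn ℝ Set.univ (fseq m))
    (hmax : ∀ β, f β ≤ f β₀)
    (huniq : ∀ β, β ≠ β₀ → f β < f β₀)       -- β₀ is the unique maximizer of f
    (hptwise : ∀ β, Tendsto (fun m => fseq m β) atTop (𝓝 (f β)))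
    (hβmax : ∀ m β, fseq m β ≤ fseq m (βseq m)) :  -- βₙ maximizes fₙ
    (∀ K : Set (EuclideanSpace ℝ (Fin p)), IsCompact K →
        TendstoUniformlyOn fseq f atTop K)
      ∧ Tendsto βseq atTop (𝓝 β₀) :=
  concave_pointwise_convergence_of_maximizers_general f fseq β₀ βseq hf_concave hfn_concave huniq
    hptwise hβmax
end

section
/- The negative Hessian of f(β) = ∫_0^τ [ (β − β_0)' s_1(s,β_0) − log(s_0(s,β)/s_0(s,β_0)) s_0(s,β_0) ] λ_0(s) ds equals −∇²f(β) = ∫_0^τ v(s,β) s_0(s,β_0) λ_0(s) ds, where v(s,β) = s_2(s,β)/s_0(s,β) − (s_1(s,β)/s_0(s,β))^{⊗2}; this matrix is positive semidefinite whenever v(s,β) is positive semidefinite for each s, so f is concave, and if additionally Σ_τ = ∫_0^τ v(s,β_0) s_0(s,β_0) λ_0(s)ds is positive definite, then f is strictly concave at β_0 and β_0 is its unique maximizer. -/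
/-!
Along a line `u ↦ β + u • y` the integrand of `f` is twice differentiable in `u`, with both
derivatives bounded by a constant multiple of `λ₀` (because `c ≤ s₀ ≤ C`, `‖s₁‖ ≤ C` and
`‖s₂ y‖ ≤ C‖y‖`), so dominated convergence differentiates twice under the integral. The second
derivative of the logarithmic derivative `⟪y, s₁⟫ / s₀` is `y'vy`, which gives the Hessian
formula. Nonnegative `v` makes every restriction of `f` to a line concave, hence `f` concave. At
`β₀` the first derivative vanishes in every direction, and a negative second derivative there
makes the (antitone) first derivative negative just to the right of `0`, so `f` strictly
decreases along every ray leaving `β₀`.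
-/

open MeasureTheory Set Filter
open scoped RealInnerProductSpace

theorem Antitone.lt_of_hasDerivAt_neg {h : ℝ → ℝ} {d x u : ℝ} (hh : Antitone h)
    (hd : HasDerivAt h d x) (hd_neg : d < 0) (hxu : x < u) : h u < h x := by
  obtain ⟨v, hv_slope, hv⟩ := ((hd.tendsto_slope_zero_right.eventually (gt_mem_nhds hd_neg)).and
    (Ioo_mem_nhdsGT (sub_pos.2 hxu))).exists
  have hv_lt : h (x + v) < h x :=
    sub_neg.1 (neg_of_mul_neg_right hv_slope (inv_nonneg.2 hv.1.le))
  exact (hh (by linarith [hv.2])).trans_lt hv_lt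

theorem lt_of_antitone_deriv_of_hasDerivAt_neg {g g' : ℝ → ℝ} {d x u : ℝ}
    (hg : ∀ t, HasDerivAt g (g' t) t) (hg' : Antitone g') (hd : HasDerivAt g' d x)
    (hd_neg : d < 0) (hx : g' x = 0) (hxu : x < u) : g u < g x := by
  refine strictAntiOn_of_hasDerivWithinAt_neg (convex_Ici x)
    (fun t _ => (hg t).continuousAt.continuousWithinAt) (fun t _ => (hg t).hasDerivWithinAt)
    (fun t ht => ?_) (mem_Ici.2 le_rfl) hxu.le hxu
  rw [interior_Ici] at ht
  exact hx ▸ hg'.lt_of_hasDerivAt_neg hd hd_neg ht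

theorem concaveOn_univ_of_concaveOn_line {E : Type*} [AddCommGroup E] [Module ℝ E] {f : E → ℝ}
    (h : ∀ x y : E, ConcaveOn ℝ univ fun t : ℝ => f (x + t • y)) : ConcaveOn ℝ univ f := by
  refine ⟨convex_univ, fun x _ z _ a b ha hb hab => ?_⟩
  have hseg : x + b • (z - x) = a • x + b • z := by
    rw [show a = 1 - b by linarith]; module
  simpa [hseg] using (h x (z - x)).2 (mem_univ 0) (mem_univ 1) ha hb hab

section LineConcavity

variable {E : Type*} [AddCommGroup E] [Module ℝ E] {f : E → ℝ} {D : E → E → ℝ → ℝ}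
  {Q : E → E → ℝ}

theorem concaveOn_univ_of_hasDerivAt_line
    (hD : ∀ x y t, HasDerivAt (fun u : ℝ => f (x + u • y)) (D x y t) t)
    (hD' : ∀ x y t, HasDerivAt (D x y) (-Q (x + t • y) y) t) (hQ : ∀ x y, 0 ≤ Q x y) :
    ConcaveOn ℝ univ f := by
  refine concaveOn_univ_of_concaveOn_line fun x y =>
    Antitone.concaveOn_univ_of_deriv (fun t => (hD x y t).differentiableAt) ?_
  rw [funext fun t => (hD x y t).deriv]
  exact antitone_of_hasDerivAt_nonpos (hD' x y) fun t => neg_nonpos.2 (hQ _ _)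

theorem lt_of_hasDerivAt_line_of_pos {x x₀ : E}
    (hD : ∀ x y t, HasDerivAt (fun u : ℝ => f (x + u • y)) (D x y t) t)
    (hD' : ∀ x y t, HasDerivAt (D x y) (-Q (x + t • y) y) t) (hQ : ∀ x y, 0 ≤ Q x y)
    (hcrit : ∀ y, D x₀ y 0 = 0) (hQ₀ : ∀ y, y ≠ 0 → 0 < Q x₀ y) (hx : x ≠ x₀) :
    f x < f x₀ := by
  have hanti := antitone_of_hasDerivAt_nonpos (hD' x₀ (x - x₀)) fun t => neg_nonpos.2 (hQ _ _)
  have hcurv := hD' x₀ (x - x₀) 0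
  rw [zero_smul, add_zero] at hcurv
  simpa using lt_of_antitone_deriv_of_hasDerivAt_neg (hD x₀ (x - x₀)) hanti hcurv
    (neg_neg_of_pos (hQ₀ _ (sub_ne_zero.2 hx))) (hcrit _) zero_lt_one

end LineConcavity

theorem norm_inner_div_le {E : Type*} [NormedAddCommGroup E] [InnerProductSpace ℝ E]
    {u v : E} {a c K : ℝ} (hc : 0 < c) (ha : c ≤ a) (hv : ‖v‖ ≤ K) :
    ‖⟪u, v⟫ / a‖ ≤ ‖u‖ * K / c := by
  rw [norm_div, Real.norm_of_nonneg (hc.le.trans ha)]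
  have hK : 0 ≤ ‖u‖ * K := mul_nonneg (norm_nonneg u) ((norm_nonneg v).trans hv)
  exact div_le_div₀ hK ((norm_inner_le_norm u v).trans (by gcongr)) hc ha

theorem hasDerivAt_integral_mul_of_bounded {α : Type*} [MeasurableSpace α] {μ : Measure α}
    {A A' : ℝ → α → ℝ} {w : α → ℝ} {K₀ K t₀ : ℝ}
    (hw : Integrable w μ) (hA_meas : ∀ t, AEStronglyMeasurable (A t) μ)
    (hA_bdd : ∀ᵐ s ∂μ, ‖A t₀ s‖ ≤ K₀) (hA'_meas : AEStronglyMeasurable (A' t₀) μ)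
    (hA'_bdd : ∀ᵐ s ∂μ, ∀ t, ‖A' t s‖ ≤ K)
    (hA' : ∀ᵐ s ∂μ, ∀ t, HasDerivAt (A · s) (A' t s) t) :
    HasDerivAt (fun t => ∫ s, A t s * w s ∂μ) (∫ s, A' t₀ s * w s ∂μ) t₀ := by
  refine (hasDerivAt_integral_of_dominated_loc_of_deriv_le (F := fun t s => A t s * w s)
    (F' := fun t s => A' t s * w s) (bound := fun s => K * ‖w s‖)
    univ_mem (Eventually.of_forall fun t => (hA_meas t).mul hw.1)
    (hw.bdd_mul (hA_meas t₀) hA_bdd) (hA'_meas.mul hw.1) ?_ (hw.norm.const_mul K) ?_).2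
  · filter_upwards [hA'_bdd] with s hs t _
    rw [norm_mul]
    exact mul_le_mul_of_nonneg_right (hs t) (norm_nonneg _)
  · filter_upwards [hA'] with s hs t _
    exact (hs t).mul_const _

section Line

variable {E : Type*} [NormedAddCommGroup E] [InnerProductSpace ℝ E] [CompleteSpace E]

theorem HasGradientAt.hasDerivAt_comp_add_smul {φ : E → ℝ} {v x y : E} {t : ℝ}
    (h : HasGradientAt φ v (x + t • y)) : HasDerivAt (fun u : ℝ => φ (x + u • y)) ⟪y, v⟫ t := by
  have hline : HasDerivAt (fun u : ℝ => x + u • y) y t := by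
    simpa using ((hasDerivAt_id t).smul_const y).const_add x
  have hcomp := h.hasFDerivAt.comp_hasDerivAt t hline
  rw [InnerProductSpace.toDual_apply_apply, real_inner_comm] at hcomp
  exact hcomp

theorem hasDerivAt_inner_sub_log_div_line {a : E → ℝ} {g w x y x₀ : E} {t : ℝ}
    (ha : HasGradientAt a g (x + t • y)) (ht : a (x + t • y) ≠ 0) (h₀ : a x₀ ≠ 0) :
    HasDerivAt (fun u : ℝ => ⟪x + u • y - x₀, w⟫ - Real.log (a (x + u • y) / a x₀) * a x₀)
      (⟪y, w⟫ - ⟪y, g⟫ / a (x + t • y) * a x₀) t := by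
  have hlin : HasDerivAt (fun u : ℝ => ⟪x + u • y - x₀, w⟫) ⟪y, w⟫ t := by
    have hline : HasDerivAt (fun u : ℝ => x + u • y - x₀) y t := by
      simpa using (((hasDerivAt_id t).smul_const y).const_add x).sub_const x₀
    simpa using hline.inner ℝ (hasDerivAt_const t w)
  have hlog := (ha.hasDerivAt_comp_add_smul.div_const (a x₀)).log (div_ne_zero ht h₀)
  refine (hlin.sub (hlog.mul_const (a x₀))).congr_deriv ?_
  field_simp

theorem hasDerivAt_inner_div_line {a : E → ℝ} {a' : E → E} {b x y : E} {t : ℝ}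
    (ha : HasGradientAt a (a' (x + t • y)) (x + t • y))
    (ha' : HasGradientAt (fun z => ⟪y, a' z⟫) b (x + t • y)) (ht : a (x + t • y) ≠ 0) :
    HasDerivAt (fun u : ℝ => ⟪y, a' (x + u • y)⟫ / a (x + u • y))
      (⟪y, b⟫ / a (x + t • y) - (⟪y, a' (x + t • y)⟫ / a (x + t • y)) ^ 2) t :=
  (ha'.hasDerivAt_comp_add_smul.div ha.hasDerivAt_comp_add_smul ht).congr_deriv (by
    field_simp)

end Line

section Profile

variable {E : Type*} [NormedAddCommGroup E] [InnerProductSpace ℝ E]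
  {α : Type*} [MeasurableSpace α] {μ : Measure α}
  {s₀ : α → E → ℝ} {s₁ : α → E → E} {s₂ : α → E → E → E} {w : α → ℝ} {c C : ℝ} {β₀ x y : E}

theorem norm_inner_sub_inner_div_mul_le {a : E → ℝ} {v : E → E} (hc : 0 < c)
    (hlow : ∀ β, c ≤ a β) (hupp : ∀ β, a β ≤ C) (hv : ∀ β, ‖v β‖ ≤ C) (β : E) :
    ‖⟪y, v β₀⟫ - ⟪y, v β⟫ / a β * a β₀‖ ≤ ‖y‖ * C + ‖y‖ * C / c * C := by
  refine (norm_sub_le _ _).trans (add_le_add ?_ ?_)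
  · exact (norm_inner_le_norm _ _).trans (by gcongr; exact hv β₀)
  · rw [norm_mul, Real.norm_of_nonneg (hc.le.trans (hlow β₀))]
    have hC : 0 ≤ C := (norm_nonneg _).trans (hv β₀)
    gcongr
    exacts [hc.le.trans (hlow β₀), norm_inner_div_le hc (hlow β) (hv β), hupp β₀]

theorem aestronglyMeasurable_inner_sub_inner_div_mul
    (hmeas₀ : ∀ β, AEStronglyMeasurable (fun s => s₀ s β) μ)
    (hmeas₁ : ∀ β, AEStronglyMeasurable (fun s => s₁ s β) μ) (β : E) :
    AEStronglyMeasurable (fun s => ⟪y, s₁ s β₀⟫ - ⟪y, s₁ s β⟫ / s₀ s β * s₀ s β₀) μ := by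
  have := (hmeas₀ β).aemeasurable
  have := (hmeas₀ β₀).aemeasurable
  have := (aestronglyMeasurable_const (b := y)).inner (𝕜 := ℝ) (hmeas₁ β₀) |>.aemeasurable
  have := (aestronglyMeasurable_const (b := y)).inner (𝕜 := ℝ) (hmeas₁ β) |>.aemeasurable
  exact AEMeasurable.aestronglyMeasurable (by fun_prop)

variable [CompleteSpace E]

theorem hasDerivAt_integral_inner_sub_log_div_line (t : ℝ) (hw : Integrable w μ) (hc : 0 < c)
    (hlow : ∀ᵐ s ∂μ, ∀ β, c ≤ s₀ s β) (hupp : ∀ᵐ s ∂μ, ∀ β, s₀ s β ≤ C)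
    (hs₁ : ∀ᵐ s ∂μ, ∀ β, ‖s₁ s β‖ ≤ C)
    (hmeas₀ : ∀ β, AEStronglyMeasurable (fun s => s₀ s β) μ)
    (hmeas₁ : ∀ β, AEStronglyMeasurable (fun s => s₁ s β) μ)
    (hgrad₀ : ∀ᵐ s ∂μ, ∀ β, HasGradientAt (s₀ s) (s₁ s β) β) :
    HasDerivAt (fun u => ∫ s, (⟪x + u • y - β₀, s₁ s β₀⟫
        - Real.log (s₀ s (x + u • y) / s₀ s β₀) * s₀ s β₀) * w s ∂μ)
      (∫ s, (⟪y, s₁ s β₀⟫ - ⟪y, s₁ s (x + t • y)⟫ / s₀ s (x + t • y) * s₀ s β₀) * w s ∂μ) t := by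
  refine hasDerivAt_integral_mul_of_bounded
    (A := fun u s => ⟪x + u • y - β₀, s₁ s β₀⟫ - Real.log (s₀ s (x + u • y) / s₀ s β₀) * s₀ s β₀)
    (A' := fun u s => ⟪y, s₁ s β₀⟫ - ⟪y, s₁ s (x + u • y)⟫ / s₀ s (x + u • y) * s₀ s β₀)
    hw (fun u => ?_) (K₀ := ‖x + t • y - β₀‖ * C + (Real.log C - Real.log c) * C) ?_
    (aestronglyMeasurable_inner_sub_inner_div_mul hmeas₀ hmeas₁ _)
    (K := ‖y‖ * C + ‖y‖ * C / c * C) ?_ ?_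
  · have := (hmeas₀ (x + u • y)).aemeasurable
    have := (hmeas₀ β₀).aemeasurable
    have := (aestronglyMeasurable_const (b := x + u • y - β₀)).inner (𝕜 := ℝ) (hmeas₁ β₀)
      |>.aemeasurable
    exact AEMeasurable.aestronglyMeasurable (by fun_prop)
  · filter_upwards [hlow, hupp, hs₁] with s hlow hupp hs₁
    have hlog : ∀ β, Real.log c ≤ Real.log (s₀ s β) ∧ Real.log (s₀ s β) ≤ Real.log C :=
      fun β => ⟨Real.log_le_log hc (hlow β), Real.log_le_log (hc.trans_le (hlow β)) (hupp β)⟩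
    refine (norm_sub_le _ _).trans (add_le_add ?_ ?_)
    · exact (norm_inner_le_norm _ _).trans (by gcongr; exact hs₁ β₀)
    · rw [norm_mul, Real.log_div (hc.trans_le (hlow _)).ne' (hc.trans_le (hlow _)).ne',
        Real.norm_eq_abs, Real.norm_of_nonneg (hc.le.trans (hlow β₀))]
      exact mul_le_mul (abs_sub_le_of_le_of_le (hlog _).1 (hlog _).2 (hlog _).1 (hlog _).2)
        (hupp β₀) (hc.le.trans (hlow β₀)) (sub_nonneg.2 ((hlog β₀).1.trans (hlog β₀).2))
  · filter_upwards [hlow, hupp, hs₁] with s hlow hupp hs₁ u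
    exact norm_inner_sub_inner_div_mul_le hc hlow hupp hs₁ _
  · filter_upwards [hlow, hgrad₀] with s hlow hgrad₀ u
    exact hasDerivAt_inner_sub_log_div_line (hgrad₀ _) (hc.trans_le (hlow _)).ne'
      (hc.trans_le (hlow _)).ne'

theorem hasDerivAt_integral_inner_div_line (t : ℝ) (hw : Integrable w μ) (hc : 0 < c)
    (hlow : ∀ᵐ s ∂μ, ∀ β, c ≤ s₀ s β) (hupp : ∀ᵐ s ∂μ, ∀ β, s₀ s β ≤ C)
    (hs₁ : ∀ᵐ s ∂μ, ∀ β, ‖s₁ s β‖ ≤ C) (hs₂ : ∀ᵐ s ∂μ, ∀ β, ‖s₂ s β y‖ ≤ C * ‖y‖)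
    (hmeas₀ : ∀ β, AEStronglyMeasurable (fun s => s₀ s β) μ)
    (hmeas₁ : ∀ β, AEStronglyMeasurable (fun s => s₁ s β) μ)
    (hmeas₂ : ∀ β, AEStronglyMeasurable (fun s => s₂ s β y) μ)
    (hgrad₀ : ∀ᵐ s ∂μ, ∀ β, HasGradientAt (s₀ s) (s₁ s β) β)
    (hgrad₁ : ∀ᵐ s ∂μ, ∀ β, HasGradientAt (fun b => ⟪y, s₁ s b⟫) (s₂ s β y) β) :
    HasDerivAt (fun u => ∫ s, (⟪y, s₁ s β₀⟫
        - ⟪y, s₁ s (x + u • y)⟫ / s₀ s (x + u • y) * s₀ s β₀) * w s ∂μ)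
      (∫ s, -(⟪y, s₂ s (x + t • y) y⟫ / s₀ s (x + t • y)
        - (⟪y, s₁ s (x + t • y)⟫ / s₀ s (x + t • y)) ^ 2) * s₀ s β₀ * w s ∂μ) t := by
  refine hasDerivAt_integral_mul_of_bounded
    (A := fun u s => ⟪y, s₁ s β₀⟫ - ⟪y, s₁ s (x + u • y)⟫ / s₀ s (x + u • y) * s₀ s β₀)
    (A' := fun u s => -(⟪y, s₂ s (x + u • y) y⟫ / s₀ s (x + u • y)
        - (⟪y, s₁ s (x + u • y)⟫ / s₀ s (x + u • y)) ^ 2) * s₀ s β₀)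
    hw (fun u => aestronglyMeasurable_inner_sub_inner_div_mul hmeas₀ hmeas₁ _)
    (K₀ := ‖y‖ * C + ‖y‖ * C / c * C) ?_ ?_
    (K := (‖y‖ * (C * ‖y‖) / c + (‖y‖ * C / c) ^ 2) * C) ?_ ?_
  · filter_upwards [hlow, hupp, hs₁] with s hlow hupp hs₁
    exact norm_inner_sub_inner_div_mul_le hc hlow hupp hs₁ _
  · have := (hmeas₀ (x + t • y)).aemeasurable
    have := (hmeas₀ β₀).aemeasurable
    have := (aestronglyMeasurable_const (b := y)).inner (𝕜 := ℝ) (hmeas₁ (x + t • y))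
      |>.aemeasurable
    have := (aestronglyMeasurable_const (b := y)).inner (𝕜 := ℝ) (hmeas₂ (x + t • y))
      |>.aemeasurable
    exact AEMeasurable.aestronglyMeasurable (by fun_prop)
  · filter_upwards [hlow, hupp, hs₁, hs₂] with s hlow hupp hs₁ hs₂ u
    have hC : 0 ≤ C := (norm_nonneg _).trans (hs₁ β₀)
    rw [norm_mul, norm_neg, Real.norm_of_nonneg (hc.le.trans (hlow β₀))]
    refine mul_le_mul ((norm_sub_le _ _).trans (add_le_add ?_ ?_)) (hupp β₀)
      (hc.le.trans (hlow β₀)) (by positivity)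
    · exact norm_inner_div_le hc (hlow _) (hs₂ _)
    · rw [norm_pow]
      exact pow_le_pow_left₀ (norm_nonneg _) (norm_inner_div_le hc (hlow _) (hs₁ _)) 2
  · filter_upwards [hlow, hgrad₀, hgrad₁] with s hlow hgrad₀ hgrad₁ u
    have hq := hasDerivAt_inner_div_line (x := x) (t := u) (hgrad₀ _) (hgrad₁ _)
      (hc.trans_le (hlow _)).ne'
    simpa only [neg_mul] using (hq.mul_const (s₀ s β₀)).const_sub ⟪y, s₁ s β₀⟫

end Profile

theorem hessian_concavity_unique_maximizer_profile_objective_general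
    {p : ℕ} (τ : ℝ)
    (s₀ : ℝ → EuclideanSpace ℝ (Fin p) → ℝ)
    (s₁ : ℝ → EuclideanSpace ℝ (Fin p) → EuclideanSpace ℝ (Fin p))
    (s₂ : ℝ → EuclideanSpace ℝ (Fin p) →
      EuclideanSpace ℝ (Fin p) → EuclideanSpace ℝ (Fin p))  -- s₂(s,β) as a linear map on y
    (lam₀ : ℝ → ℝ)
    (β₀ : EuclideanSpace ℝ (Fin p))
    (c C : ℝ) (hc : 0 < c)
    (hs₀_low : ∀ s ∈ Icc 0 τ, ∀ β, c ≤ s₀ s β)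
    (hs₀_bdd : ∀ s ∈ Icc 0 τ, ∀ β, s₀ s β ≤ C)
    (hs₁_bdd : ∀ s ∈ Icc 0 τ, ∀ β, ‖s₁ s β‖ ≤ C)
    (hs₂_bdd : ∀ s ∈ Icc 0 τ, ∀ β y, ‖s₂ s β y‖ ≤ C * ‖y‖)
    (hlam₀_nonneg : ∀ s, 0 ≤ lam₀ s)
    (hlam₀_int : IntegrableOn lam₀ (Icc 0 τ))
    (hmeas₀ : ∀ β, AEStronglyMeasurable (fun s => s₀ s β) (volume.restrict (Icc 0 τ)))
    (hmeas₁ : ∀ β, AEStronglyMeasurable (fun s => s₁ s β) (volume.restrict (Icc 0 τ)))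
    (hmeas₂ : ∀ β y, AEStronglyMeasurable (fun s => s₂ s β y)
      (volume.restrict (Icc 0 τ)))
    -- s₁ = ∂s₀/∂β and s₂ = ∂s₁/∂β  (Condition (d))
    (hgrad₀ : ∀ s ∈ Icc 0 τ, ∀ β, HasGradientAt (fun b => s₀ s b) (s₁ s β) β)
    (hgrad₁ : ∀ s ∈ Icc 0 τ, ∀ β y, HasGradientAt (fun b => ⟪y, s₁ s b⟫) (s₂ s β y) β)
    (f : EuclideanSpace ℝ (Fin p) → ℝ)
    (hf : ∀ β, f β = ∫ s in Icc 0 τ,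
      (⟪β - β₀, s₁ s β₀⟫ - Real.log (s₀ s β / s₀ s β₀) * s₀ s β₀) * lam₀ s)
    -- the quadratic form y ↦ y' v(s,β) y  of  v = s₂/s₀ − (s₁/s₀)^{⊗2}
    (vq : ℝ → EuclideanSpace ℝ (Fin p) → EuclideanSpace ℝ (Fin p) → ℝ)
    (hvq : ∀ s β y, vq s β y
      = ⟪y, s₂ s β y⟫ / s₀ s β - (⟪y, s₁ s β⟫ / s₀ s β)^2) :
    -- (1) −∇²f(β) = ∫ v(s,β) s₀(s,β₀) λ₀(s) ds, via second directional derivatives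
    (∀ β y, - deriv (deriv (fun t : ℝ => f (β + t • y))) 0
        = ∫ s in Icc 0 τ, vq s β y * s₀ s β₀ * lam₀ s)
    ∧
    -- (2) v(s,β) positive semidefinite for all s ⟹ f concave
    ((∀ s ∈ Icc 0 τ, ∀ β y, 0 ≤ vq s β y) → ConcaveOn ℝ Set.univ f)
    ∧
    -- (3) additionally Σ_τ positive definite ⟹ β₀ unique maximizer
    ((∀ s ∈ Icc 0 τ, ∀ β y, 0 ≤ vq s β y) →
      (∀ y : EuclideanSpace ℝ (Fin p), y ≠ 0 →
        0 < ∫ s in Icc 0 τ, vq s β₀ y * s₀ s β₀ * lam₀ s) →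
      ∀ β, β ≠ β₀ → f β < f β₀) := by
  set D := fun (β y : EuclideanSpace ℝ (Fin p)) (t : ℝ) => ∫ s in Icc 0 τ,
    (⟪y, s₁ s β₀⟫ - ⟪y, s₁ s (β + t • y)⟫ / s₀ s (β + t • y) * s₀ s β₀) * lam₀ s
  set Q := fun (β y : EuclideanSpace ℝ (Fin p)) => ∫ s in Icc 0 τ, vq s β y * s₀ s β₀ * lam₀ s
  have ae_of_Icc : ∀ {P : ℝ → Prop}, (∀ s ∈ Icc 0 τ, P s) →
      ∀ᵐ s ∂(volume.restrict (Icc 0 τ)), P s :=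
    ae_restrict_of_forall_mem measurableSet_Icc
  have hD : ∀ β y t, HasDerivAt (fun u : ℝ => f (β + u • y)) (D β y t) t := fun β y t => by
    simp only [hf]
    exact hasDerivAt_integral_inner_sub_log_div_line t hlam₀_int hc (ae_of_Icc hs₀_low)
      (ae_of_Icc hs₀_bdd) (ae_of_Icc hs₁_bdd) hmeas₀ hmeas₁ (ae_of_Icc hgrad₀)
  have hD' : ∀ β y t, HasDerivAt (D β y) (-Q (β + t • y) y) t := fun β y t => by
    simp only [Q, hvq, ← integral_neg, ← neg_mul]
    exact hasDerivAt_integral_inner_div_line t hlam₀_int hc (ae_of_Icc hs₀_low)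
      (ae_of_Icc hs₀_bdd) (ae_of_Icc hs₁_bdd) (ae_of_Icc fun s hs β => hs₂_bdd s hs β y)
      hmeas₀ hmeas₁ (fun β => hmeas₂ β y) (ae_of_Icc hgrad₀)
      (ae_of_Icc fun s hs β => hgrad₁ s hs β y)
  have hQ : (∀ s ∈ Icc 0 τ, ∀ β y, 0 ≤ vq s β y) → ∀ β y, 0 ≤ Q β y := fun hpsd β y =>
    setIntegral_nonneg measurableSet_Icc fun s hs =>
      mul_nonneg (mul_nonneg (hpsd s hs β y) (hc.le.trans (hs₀_low s hs β₀))) (hlam₀_nonneg s)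
  have hcrit : ∀ y, D β₀ y 0 = 0 := fun y =>
    setIntegral_eq_zero_of_forall_eq_zero fun s hs => by
      rw [zero_smul, add_zero, div_mul_cancel₀ _ (hc.trans_le (hs₀_low s hs β₀)).ne', sub_self,
        zero_mul]
  refine ⟨fun β y => ?_, fun hpsd => concaveOn_univ_of_hasDerivAt_line hD hD' (hQ hpsd),
    fun hpsd hpd β hβ => lt_of_hasDerivAt_line_of_pos hD hD' (hQ hpsd) hcrit hpd hβ⟩
  rw [funext fun t => (hD β y t).deriv, (hD' β y 0).deriv, zero_smul, add_zero, neg_neg]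

/-- For
`f(β) = ∫_0^τ [ (β−β₀)'s_1(s,β₀) − log(s_0(s,β)/s_0(s,β₀)) s_0(s,β₀) ] λ_0(s) ds`,
the negative Hessian is `−∇²f(β) = ∫_0^τ v(s,β) s_0(s,β₀) λ_0(s) ds` with
`v(s,β) = s_2(s,β)/s_0(s,β) − (s_1(s,β)/s_0(s,β))^{⊗2}` (stated via the quadratic
forms `y ↦ y'v(s,β)y` and second directional derivatives of `f`); if each `v(s,β)` is
positive semidefinite then `f` is concave, and if in addition
`Σ_τ = ∫_0^τ v(s,β₀) s_0(s,β₀) λ_0(s) ds` is positive definite, then `β₀` is the unique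
maximizer of `f` (`f(β) < f(β₀)` for `β ≠ β₀`). -/
theorem hessian_concavity_unique_maximizer_profile_objective
    {p : ℕ} (τ : ℝ) (hτ : 0 ≤ τ)
    (s₀ : ℝ → EuclideanSpace ℝ (Fin p) → ℝ)
    (s₁ : ℝ → EuclideanSpace ℝ (Fin p) → EuclideanSpace ℝ (Fin p))
    (s₂ : ℝ → EuclideanSpace ℝ (Fin p) →
      EuclideanSpace ℝ (Fin p) → EuclideanSpace ℝ (Fin p))  -- s₂(s,β) as a linear map on y
    (lam₀ : ℝ → ℝ)
    (β₀ : EuclideanSpace ℝ (Fin p))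
    (c C : ℝ) (hc : 0 < c)
    (hs₀_low : ∀ s ∈ Icc 0 τ, ∀ β, c ≤ s₀ s β)
    (hs₀_bdd : ∀ s ∈ Icc 0 τ, ∀ β, s₀ s β ≤ C)
    (hs₁_bdd : ∀ s ∈ Icc 0 τ, ∀ β, ‖s₁ s β‖ ≤ C)
    (hs₂_bdd : ∀ s ∈ Icc 0 τ, ∀ β y, ‖s₂ s β y‖ ≤ C * ‖y‖)
    (hlam₀_nonneg : ∀ s, 0 ≤ lam₀ s)
    (hlam₀_int : IntegrableOn lam₀ (Icc 0 τ))
    (hmeas₀ : ∀ β, AEStronglyMeasurable (fun s => s₀ s β) (volume.restrict (Icc 0 τ)))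
    (hmeas₁ : ∀ β, AEStronglyMeasurable (fun s => s₁ s β) (volume.restrict (Icc 0 τ)))
    (hmeas₂ : ∀ β y, AEStronglyMeasurable (fun s => s₂ s β y)
      (volume.restrict (Icc 0 τ)))
    -- s₁ = ∂s₀/∂β and s₂ = ∂s₁/∂β  (Condition (d))
    (hgrad₀ : ∀ s ∈ Icc 0 τ, ∀ β, HasGradientAt (fun b => s₀ s b) (s₁ s β) β)
    (hgrad₁ : ∀ s ∈ Icc 0 τ, ∀ β y, HasGradientAt (fun b => ⟪y, s₁ s b⟫) (s₂ s β y) β)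
    (f : EuclideanSpace ℝ (Fin p) → ℝ)
    (hf : ∀ β, f β = ∫ s in Icc 0 τ,
      (⟪β - β₀, s₁ s β₀⟫ - Real.log (s₀ s β / s₀ s β₀) * s₀ s β₀) * lam₀ s)
    -- the quadratic form y ↦ y' v(s,β) y  of  v = s₂/s₀ − (s₁/s₀)^{⊗2}
    (vq : ℝ → EuclideanSpace ℝ (Fin p) → EuclideanSpace ℝ (Fin p) → ℝ)
    (hvq : ∀ s β y, vq s β y
      = ⟪y, s₂ s β y⟫ / s₀ s β - (⟪y, s₁ s β⟫ / s₀ s β)^2) :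
    -- (1) −∇²f(β) = ∫ v(s,β) s₀(s,β₀) λ₀(s) ds, via second directional derivatives
    (∀ β y, - deriv (deriv (fun t : ℝ => f (β + t • y))) 0
        = ∫ s in Icc 0 τ, vq s β y * s₀ s β₀ * lam₀ s)
    ∧
    -- (2) v(s,β) positive semidefinite for all s ⟹ f concave
    ((∀ s ∈ Icc 0 τ, ∀ β y, 0 ≤ vq s β y) → ConcaveOn ℝ Set.univ f)
    ∧
    -- (3) additionally Σ_τ positive definite ⟹ β₀ unique maximizer
    ((∀ s ∈ Icc 0 τ, ∀ β y, 0 ≤ vq s β y) →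
      (∀ y : EuclideanSpace ℝ (Fin p), y ≠ 0 →
        0 < ∫ s in Icc 0 τ, vq s β₀ y * s₀ s β₀ * lam₀ s) →
      ∀ β, β ≠ β₀ → f β < f β₀) :=
  hessian_concavity_unique_maximizer_profile_objective_general τ s₀ s₁ s₂ lam₀ β₀ c C hc hs₀_low
    hs₀_bdd hs₁_bdd hs₂_bdd hlam₀_nonneg hlam₀_int hmeas₀ hmeas₁ hmeas₂ hgrad₀ hgrad₁ f hf vq hvq
end
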